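/- Let A, B be maximally monotone with B single-valued, γ > 0, λ ∈ (0,2), and let w⋆ be a fixed point of the DR operator with x⋆ = J_{γB}(w⋆). For DRS iterates x^k = J_{γB}(w^k), y^k = J_{γA}(2x^k − w^k), w^{k+1} = w^k + λ(y^k − x^k), monotonicity of A and B implies ⟨w^k − w⋆ + (1/λ)(w^{k+1} − w^k), w^{k+1} − w^k⟩ ≤ 0. -/
import Mathlib


open scoped RealInnerProductSpace

/-- A set-valued operator is monotone. -/
def MonotoneOp {n : ℕ} (A : EuclideanSpace ℝ (Fin n) → Set (EuclideanSpace ℝ (Fin n))) : Prop :=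
  ∀ ⦃x y u v⦄, u ∈ A x → v ∈ A y → 0 ≤ ⟪u - v, x - y⟫

/-- A set-valued operator is maximally monotone. -/
def MaximallyMonotoneOp {n : ℕ}
    (A : EuclideanSpace ℝ (Fin n) → Set (EuclideanSpace ℝ (Fin n))) : Prop :=
  MonotoneOp A ∧ ∀ x u, (∀ y v, v ∈ A y → 0 ≤ ⟪u - v, x - y⟫) → u ∈ A x

/-- the key one-step inequality of the DRS iteration, obtained from the
monotonicity of `A` and `B` applied at the pairs `(xᵏ, x⋆)` and `(yᵏ, x⋆)`. -/
theorem stmt8 {n : ℕ} (A B : EuclideanSpace ℝ (Fin n) → Set (EuclideanSpace ℝ (Fin n)))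
    (hA : MaximallyMonotoneOp A) (hB : MaximallyMonotoneOp B)
    (hBsingle : ∀ x, (B x).Subsingleton)
    (γ lam : ℝ) (hγ : 0 < γ) (hlam : lam ∈ Set.Ioo (0 : ℝ) 2)
    (JA JB : EuclideanSpace ℝ (Fin n) → EuclideanSpace ℝ (Fin n))
    (hJA : ∀ w, γ⁻¹ • (w - JA w) ∈ A (JA w))
    (hJB : ∀ w, γ⁻¹ • (w - JB w) ∈ B (JB w))
    (T : EuclideanSpace ℝ (Fin n) → EuclideanSpace ℝ (Fin n))
    (hT : ∀ w, T w = w + lam • (JA ((2 : ℝ) • JB w - w) - JB w))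
    (wstar : EuclideanSpace ℝ (Fin n)) (hfix : T wstar = wstar)
    (xstar : EuclideanSpace ℝ (Fin n)) (hxstar : xstar = JB wstar)
    (wk xk yk wk1 : EuclideanSpace ℝ (Fin n))
    (hx : xk = JB wk) (hy : yk = JA ((2 : ℝ) • xk - wk))
    (hw1 : wk1 = wk + lam • (yk - xk)) :
    ⟪wk - wstar + (1 / lam) • (wk1 - wk), wk1 - wk⟫ ≤ 0 := by
  obtain ⟨hl0, hl2⟩ := hlam
  have hlne : lam ≠ 0 := ne_of_gt hl0
  -- fixed point: JA (2•xstar - wstar) = xstar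
  have hfix' : JA ((2 : ℝ) • xstar - wstar) = xstar := by
    have := hT wstar
    rw [hfix] at this
    have h0 : lam • (JA ((2 : ℝ) • JB wstar - wstar) - JB wstar) = 0 := by
      have := this.symm
      abel_nf at this ⊢
      linear_combination (norm := abel_nf) this
    rw [smul_eq_zero] at h0
    rcases h0 with h | h
    · exact absurd h hlne
    · rw [hxstar]; rw [sub_eq_zero] at h; rw [← hxstar] at h ⊢; rw [hxstar] at h ⊢; exact h
  -- monotonicity of B at (xk, xstar)
  have hBmem : γ⁻¹ • (wstar - xstar) ∈ B xstar := by rw [hxstar]; exact hJB wstar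
  have hBk : γ⁻¹ • (wk - xk) ∈ B xk := by rw [hx]; exact hJB wk
  have hEB : 0 ≤ ⟪γ⁻¹ • (wk - xk) - γ⁻¹ • (wstar - xstar), xk - xstar⟫ :=
    hB.1 hBk hBmem
  -- monotonicity of A at (yk, xstar)
  have hAk : γ⁻¹ • ((2 : ℝ) • xk - wk - yk) ∈ A yk := by rw [hy]; exact hJA _
  have hAmem : γ⁻¹ • ((2 : ℝ) • xstar - wstar - xstar) ∈ A xstar := by
    have := hJA ((2 : ℝ) • xstar - wstar); rwa [hfix'] at this
  have hEA : 0 ≤ ⟪γ⁻¹ • ((2 : ℝ) • xk - wk - yk) - γ⁻¹ • ((2 : ℝ) • xstar - wstar - xstar),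
      yk - xstar⟫ := hA.1 hAk hAmem
  rw [← smul_sub, real_inner_smul_left] at hEB hEA
  have hγ' : 0 < γ⁻¹ := inv_pos.mpr hγ
  have hEB' : 0 ≤ ⟪wk - xk - (wstar - xstar), xk - xstar⟫ := nonneg_of_mul_nonneg_right hEB hγ'
  have hEA' : 0 ≤ ⟪(2 : ℝ) • xk - wk - yk - ((2 : ℝ) • xstar - wstar - xstar), yk - xstar⟫ :=
    nonneg_of_mul_nonneg_right hEA hγ'
  -- target
  rw [hw1]
  have hq : wk + lam • (yk - xk) - wk = lam • (yk - xk) := by abel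
  rw [hq, smul_smul, one_div_mul_cancel hlne, one_smul]
  have key : ⟪wk - wstar + (yk - xk), lam • (yk - xk)⟫
      = -lam * (⟪wk - xk - (wstar - xstar), xk - xstar⟫
        + ⟪(2 : ℝ) • xk - wk - yk - ((2 : ℝ) • xstar - wstar - xstar), yk - xstar⟫) := by
    simp only [inner_smul_right, inner_sub_left, inner_sub_right, inner_add_left,
      inner_smul_left, RCLike.conj_to_real, conj_trivial]
    have c1 : ⟪wk, xk⟫ = ⟪xk, wk⟫ := real_inner_comm _ _
    have c2 : ⟪wk, xstar⟫ = ⟪xstar, wk⟫ := real_inner_comm _ _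
    have c3 : ⟪wk, yk⟫ = ⟪yk, wk⟫ := real_inner_comm _ _
    have c4 : ⟪wstar, xk⟫ = ⟪xk, wstar⟫ := real_inner_comm _ _
    have c5 : ⟪wstar, xstar⟫ = ⟪xstar, wstar⟫ := real_inner_comm _ _
    have c6 : ⟪wstar, yk⟫ = ⟪yk, wstar⟫ := real_inner_comm _ _
    have c7 : ⟪xk, yk⟫ = ⟪yk, xk⟫ := real_inner_comm _ _
    have c8 : ⟪xk, xstar⟫ = ⟪xstar, xk⟫ := real_inner_comm _ _
    have c9 : ⟪xstar, yk⟫ = ⟪yk, xstar⟫ := real_inner_comm _ _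
    rw [c1, c2, c3, c4, c5, c6, c7, c8, c9]
    ring
  rw [key]
  have : 0 ≤ ⟪wk - xk - (wstar - xstar), xk - xstar⟫
        + ⟪(2 : ℝ) • xk - wk - yk - ((2 : ℝ) • xstar - wstar - xstar), yk - xstar⟫ :=
    add_nonneg hEB' hEA'
  nlinarith
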